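/- Let j ∈ C_c^∞(ℝ²) with ∫_{ℝ²} j(z) dz = 1, let ε > 0, and define the mollifier J_ε g = g * j_ε where j_ε(x) = ε^{−2} j(x/ε). Then for all bounded continuous functions f, g : ℝ² → ℝ and all x ∈ ℝ², the commutator identity J_ε(fg)(x) − (J_εf)(x)(J_εg)(x) = ∫_{ℝ²} j(z) (f(x−εz) − f(x)) (g(x−εz) − g(x)) dz − (f(x) − J_εf(x)) (g(x) − J_εg(x)) holds. -/
import Mathlib


open MeasureTheory Filter Topology Real Set
open scoped RealInnerProductSpace
noncomputable section

/-- The plane, with its Euclidean structure. -/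
abbrev E2 : Type := EuclideanSpace ℝ (Fin 2)

/-- Partial derivative `∂ᵢ g` at `x`. -/
def pd (i : Fin 2) (g : E2 → ℝ) (x : E2) : ℝ := fderiv ℝ g x (EuclideanSpace.single i 1)

/-- Laplacian `Δ g` at `x`. -/
def lap (g : E2 → ℝ) (x : E2) : ℝ := ∑ i : Fin 2, pd i (pd i g) x

/-- Perpendicular gradient `∇^⊥ψ = (−∂₂ψ, ∂₁ψ)`. -/
def gradPerp (ψ : E2 → ℝ) (x : E2) : Fin 2 → ℝ := ![-(pd 1 ψ x), pd 0 ψ x]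
/-- The mollifier `J_ε g = g * j_ε`, `j_ε(x) = ε^{−2} j(x/ε)`. -/
def mollify (j : E2 → ℝ) (ε : ℝ) (g : E2 → ℝ) (x : E2) : ℝ :=
  ∫ y : E2, g (x - y) * ((ε^2)⁻¹ * j (ε⁻¹ • y))

lemma mollify_eq (j : E2 → ℝ) (ε : ℝ) (hε : 0 < ε) (h : E2 → ℝ) (x : E2) :
    mollify j ε h x = ∫ z : E2, j z * h (x - ε • z) := by
  have hd : Module.finrank ℝ E2 = 2 := by simp
  have := MeasureTheory.Measure.integral_comp_smul (μ := (volume : Measure E2))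
      (fun y => h (x - y) * ((ε^2)⁻¹ * j (ε⁻¹ • y))) ε
  rw [hd] at this
  have hε2 : (ε : ℝ)^2 ≠ 0 := by positivity
  unfold mollify
  rw [show |((ε^2)⁻¹ : ℝ)| = (ε^2)⁻¹ by rw [abs_of_nonneg]; positivity] at this
  have h2 : ∀ z : E2, h (x - ε • z) * ((ε^2)⁻¹ * j (ε⁻¹ • ε • z))
      = (ε^2)⁻¹ • (j z * h (x - ε • z)) := by
    intro z
    rw [smul_smul, inv_mul_cancel₀ hε.ne', one_smul]
    simp [smul_eq_mul]; ring
  simp only [h2] at this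
  rw [MeasureTheory.integral_smul] at this
  exact (smul_right_injective ℝ (inv_ne_zero hε2) this).symm

/-- The Constantin–E–Titi commutator identity for mollifiers: for bounded continuous
`f, g` and a smooth compactly supported `j` with `∫ j = 1`,
`J_ε(fg) − (J_εf)(J_εg)
  = ∫ j(z)(f(x−εz)−f(x))(g(x−εz)−g(x))dz − (f−J_εf)(x)(g−J_εg)(x)`. -/
theorem stmt13 (j : E2 → ℝ) (hjs : ContDiff ℝ (⊤ : ℕ∞) j) (hjc : HasCompactSupport j)
    (hj1 : ∫ z : E2, j z = 1) (ε : ℝ) (hε : 0 < ε)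
    (f g : E2 → ℝ) (hfc : Continuous f) (hgc : Continuous g)
    (hfb : ∃ M, ∀ x, |f x| ≤ M) (hgb : ∃ M, ∀ x, |g x| ≤ M) (x : E2) :
    mollify j ε (fun y => f y * g y) x - mollify j ε f x * mollify j ε g x
      = (∫ z : E2, j z * ((f (x - ε • z) - f x) * (g (x - ε • z) - g x)))
        - (f x - mollify j ε f x) * (g x - mollify j ε g x) := by
  have hjcont := hjs.continuous
  -- integrability of j times bounded continuous compositions
  have key : ∀ h : E2 → ℝ, Continuous h →
      Integrable (fun z : E2 => j z * h (x - ε • z)) := by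
    intro h hc
    apply Continuous.integrable_of_hasCompactSupport
    · exact hjcont.mul (hc.comp (continuous_const.sub (continuous_id.const_smul ε)))
    · exact hjc.mul_right
  have hIf := key f hfc
  have hIg := key g hgc
  have hIfg : Integrable (fun z : E2 => j z * (f (x - ε • z) * g (x - ε • z))) :=
    key (fun y => f y * g y) (hfc.mul hgc)
  have hIj : Integrable j := hjcont.integrable_of_hasCompactSupport hjc
  rw [mollify_eq j ε hε, mollify_eq j ε hε, mollify_eq j ε hε]
  have expand : ∀ z : E2, j z * ((f (x - ε • z) - f x) * (g (x - ε • z) - g x))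
      = j z * (f (x - ε • z) * g (x - ε • z)) - f x * (j z * g (x - ε • z))
        - g x * (j z * f (x - ε • z)) + (f x * g x) * j z := by
    intro z; ring
  rw [show (∫ z : E2, j z * ((f (x - ε • z) - f x) * (g (x - ε • z) - g x)))
      = ∫ z : E2, (j z * (f (x - ε • z) * g (x - ε • z)) - f x * (j z * g (x - ε • z))
        - g x * (j z * f (x - ε • z)) + (f x * g x) * j z) from by
    exact integral_congr_ae (Filter.Eventually.of_forall expand)]
  have hA : Integrable (fun z : E2 => j z * (f (x - ε • z) * g (x - ε • z))
      - f x * (j z * g (x - ε • z))) := hIfg.sub (hIg.const_mul _)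
  have hB : Integrable (fun z : E2 => j z * (f (x - ε • z) * g (x - ε • z))
      - f x * (j z * g (x - ε • z)) - g x * (j z * f (x - ε • z))) := hA.sub (hIf.const_mul _)
  rw [integral_add hB (hIj.const_mul _), integral_sub hA (hIf.const_mul _),
    integral_sub hIfg (hIg.const_mul _),
    integral_const_mul, integral_const_mul, integral_const_mul, hj1]
  ring
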